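/- arXiv:2406.00890 — 4 statements merged into one kernel-verified Lean document; each statement's English description precedes it below -/
import Mathlib

section
/- Let E be a normed additive commutative group and let u : ℂ → E be Borel measurable. Then, as an identity of extended nonnegative reals (lower Lebesgue integrals), ∫⁻_{z ∈ {z : 0 < ‖z‖ ∧ ‖z‖ ≤ 1}} (‖u z‖₊)² dA(z) = 4π² · ∫⁻_{(s,t) ∈ [0,∞) × [0,1)} (‖u (exp(-2π(s + i t)))‖₊)² · e^{-4π s} d(s,t), where dA is Lebesgue measure on ℂ ≅ ℝ² and the right-hand integral is with respect to Lebesgue measure on ℝ². -/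
/-!
The map `w ↦ exp (-2πw)` is holomorphic and sends the half-strip `[0,∞) × [0,1)` bijectively onto
the punctured unit disk. The real Jacobian of a holomorphic map is `|f'|²`, here
`4π² e^{-4π Re w}`, so the identity is the change-of-variables formula for this map.
-/

open MeasureTheory Set Complex ENNReal

theorem ContinuousLinearMap.det_restrictScalars_toSpanSingleton (c : ℂ) :
    ((toSpanSingleton ℂ c).restrictScalars ℝ).det = normSq c := by
  rw [ContinuousLinearMap.det, ContinuousLinearMap.coe_restrictScalars,
    LinearMap.det_restrictScalars, ← Algebra.norm_complex_apply]
  congr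
  simp

theorem lintegral_image_eq_lintegral_normSq_deriv_mul {s : Set ℂ} {f f' : ℂ → ℂ}
    (hs : MeasurableSet s) (hf' : ∀ z ∈ s, HasDerivWithinAt f (f' z) s z) (hf : InjOn f s)
    (g : ℂ → ℝ≥0∞) :
    ∫⁻ z in f '' s, g z = ∫⁻ z in s, ENNReal.ofReal (normSq (f' z)) * g (f z) := by
  rw [lintegral_image_eq_lintegral_abs_det_fderiv_mul volume hs
    (fun z hz => (hf' z hz).hasFDerivWithinAt.restrictScalars ℝ) hf g]
  simp_rw [ContinuousLinearMap.det_restrictScalars_toSpanSingleton, abs_of_nonneg (normSq_nonneg _)]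

theorem MeasurableSet.reProdIm {s t : Set ℝ} (hs : MeasurableSet s) (ht : MeasurableSet t) :
    MeasurableSet (s ×ℂ t) :=
  (hs.preimage measurable_re).inter (ht.preimage measurable_im)

theorem setLIntegral_reProdIm (s t : Set ℝ) (g : ℂ → ℝ≥0∞) :
    ∫⁻ z in s ×ℂ t, g z = ∫⁻ p in s ×ˢ t, g (p.1 + p.2 * I) := by
  rw [← volume_preserving_equiv_real_prod.setLIntegral_comp_preimage_emb
    measurableEquivRealProd.measurableEmbedding]
  simp_rw [measurableEquivRealProd_apply, re_add_im]
  rfl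

open scoped Real

theorem norm_exp_neg_two_pi_mul (w : ℂ) : ‖exp (-(2 * π) * w)‖ = Real.exp (-(2 * π) * w.re) := by
  rw [norm_exp]
  congr 1
  simp

theorem normSq_neg_two_pi_mul_exp (w : ℂ) :
    normSq (-(2 * π) * exp (-(2 * π) * w)) = 4 * π ^ 2 * Real.exp (-(4 * π) * w.re) := by
  rw [normSq_mul, normSq_eq_norm_sq, normSq_eq_norm_sq, norm_exp_neg_two_pi_mul, ← Real.exp_nat_mul]
  norm_num [abs_of_pos Real.pi_pos]
  ring_nf

theorem injOn_exp_neg_two_pi_mul : InjOn (fun w : ℂ => exp (-(2 * π) * w)) (im ⁻¹' Ico 0 1) := by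
  intro w₁ h₁ w₂ h₂ heq
  obtain ⟨n, hn⟩ := exp_eq_exp_iff_exists_int.1 heq
  have hw : w₁ = w₂ - n * I := by
    refine mul_left_cancel₀ (by simp [Real.pi_ne_zero] : -(2 * (π : ℂ)) ≠ 0) ?_
    rw [hn]
    ring
  refine Complex.ext (by simp [hw]) ?_
  rw [← Int.fract_eq_self.2 h₁, ← Int.fract_eq_self.2 h₂, hw]
  simp

theorem exists_im_mem_Ico_exp_neg_two_pi_mul_eq {z : ℂ} (hz : z ≠ 0) :
    ∃ w : ℂ, w.im ∈ Ico 0 1 ∧ exp (-(2 * π) * w) = z := by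
  -- `-log z / 2π` is a preimage; shifting it by `-⌊Im⌋ i` moves its imaginary part into `[0,1)`.
  set w₀ := -log z / (2 * π)
  refine ⟨w₀ - ⌊w₀.im⌋ * I, ?_, ?_⟩
  · simp only [sub_im, mul_im, intCast_re, intCast_im, I_re, I_im, mul_one, mul_zero, add_zero,
      Int.self_sub_floor]
    exact ⟨Int.fract_nonneg _, Int.fract_lt_one _⟩
  · rw [← exp_log hz, exp_eq_exp_iff_exists_int]
    refine ⟨⌊w₀.im⌋, ?_⟩
    simp only [w₀]
    field_simp
    ring

theorem image_exp_neg_two_pi_mul_reProdIm :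
    (fun w : ℂ => exp (-(2 * π) * w)) '' (Ici 0 ×ℂ Ico 0 1) = {z : ℂ | 0 < ‖z‖ ∧ ‖z‖ ≤ 1} := by
  ext z
  constructor
  · rintro ⟨w, ⟨hre : 0 ≤ w.re, -⟩, rfl⟩
    refine ⟨norm_pos_iff.2 (exp_ne_zero _), ?_⟩
    rw [norm_exp_neg_two_pi_mul, Real.exp_le_one_iff]
    nlinarith [Real.pi_pos]
  · rintro ⟨hz₀, hz₁⟩
    obtain ⟨w, him, rfl⟩ := exists_im_mem_Ico_exp_neg_two_pi_mul_eq (norm_pos_iff.1 hz₀)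
    refine ⟨w, ⟨show 0 ≤ w.re from ?_, him⟩, rfl⟩
    rw [norm_exp_neg_two_pi_mul, Real.exp_le_one_iff] at hz₁
    nlinarith [Real.pi_pos]

theorem lintegral_sq_disk_eq_cylinder_general {E : Type*} [NormedAddCommGroup E]
    (u : ℂ → E) :
    (∫⁻ z in {z : ℂ | 0 < ‖z‖ ∧ ‖z‖ ≤ 1}, (‖u z‖₊ : ℝ≥0∞) ^ 2) =
      ENNReal.ofReal (4 * Real.pi ^ 2) *
        ∫⁻ p in Set.Ici (0 : ℝ) ×ˢ Set.Ico (0 : ℝ) 1,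
          (‖u (Complex.exp (-(2 * Real.pi) * ((p.1 : ℂ) + (p.2 : ℂ) * Complex.I)))‖₊ : ℝ≥0∞) ^ 2 *
            ENNReal.ofReal (Real.exp (-(4 * Real.pi) * p.1)) := by
  have hderiv (w : ℂ) :
      HasDerivAt (fun w => exp (-(2 * π) * w)) (-(2 * π) * exp (-(2 * π) * w)) w := by
    simpa [mul_comm] using ((hasDerivAt_id w).const_mul (-(2 * π) : ℂ)).cexp
  rw [← image_exp_neg_two_pi_mul_reProdIm,
    lintegral_image_eq_lintegral_normSq_deriv_mul
      (measurableSet_Ici.reProdIm measurableSet_Ico)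
      (fun w _ => (hderiv w).hasDerivWithinAt) (injOn_exp_neg_two_pi_mul.mono inter_subset_right),
    setLIntegral_reProdIm, ← lintegral_const_mul' _ _ ofReal_ne_top]
  refine setLIntegral_congr_fun (measurableSet_Ici.prod measurableSet_Ico) fun p _ => ?_
  rw [normSq_neg_two_pi_mul_exp, ENNReal.ofReal_mul (by positivity)]
  simp only [add_re, ofReal_re, mul_re, ofReal_im, I_re, I_im, mul_zero, zero_mul, sub_zero,
    add_zero]
  ring

/-- Change of variables to holomorphic polar coordinates `(s,t) ↦ e^{-2π(s+it)}`
on the punctured unit disk: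
`∫_D |u₀|² dxdy = 4π² ∫_{[0,∞)×[0,1)} |u∞(s,t)|² e^{-4πs} dsdt`. -/
theorem lintegral_sq_disk_eq_cylinder {E : Type*} [NormedAddCommGroup E]
    [MeasurableSpace E] [BorelSpace E]
    (u : ℂ → E) (hu : Measurable u) :
    (∫⁻ z in {z : ℂ | 0 < ‖z‖ ∧ ‖z‖ ≤ 1}, (‖u z‖₊ : ℝ≥0∞) ^ 2) =
      ENNReal.ofReal (4 * Real.pi ^ 2) *
        ∫⁻ p in Set.Ici (0 : ℝ) ×ˢ Set.Ico (0 : ℝ) 1,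
          (‖u (Complex.exp (-(2 * Real.pi) * ((p.1 : ℂ) + (p.2 : ℂ) * Complex.I)))‖₊ : ℝ≥0∞) ^ 2 *
            ENNReal.ofReal (Real.exp (-(4 * Real.pi) * p.1)) :=
  lintegral_sq_disk_eq_cylinder_general u
end

section
/- Let E be a real normed vector space, define Ψ : ℂ → ℂ by Ψ(w) = exp(-2π w), and let C ≥ 0. Suppose u : ℂ → E is differentiable (over ℝ) at every point z with 0 < ‖z‖ ≤ 1, that z ↦ fderiv ℝ u z is Borel measurable there, and that ‖fderiv ℝ u z‖ ≤ C for all such z. Then for every δ with 0 < δ < 2π, ∫⁻_{w ∈ {w : Re w ≥ 0, Im w ∈ [0,1)}} (‖fderiv ℝ (u ∘ Ψ) w‖₊)² · e^{2δ Re(w)} dA(w) ≤ 4π² C² / (4π - 2δ). -/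
/-!
Since `Ψ` is holomorphic with `|Ψ'(w)| = 2π e^{-2π Re w}` and maps the half-strip `Re w ≥ 0` into
the punctured unit disk, the chain rule gives
`‖D(u ∘ Ψ)(w)‖² e^{2δ Re w} ≤ 4π²C² e^{-(4π - 2δ) Re w}` there. The strip has unit width, so the
integral is at most `4π²C² ∫₀^∞ e^{-(4π - 2δ)s} ds = 4π²C² / (4π - 2δ)`.
-/

open MeasureTheory Set Complex ENNReal

/-- The holomorphic polar coordinate map `Ψ(w) = exp(-2πw)`. -/
noncomputable def polarCoord' : ℂ → ℂ := fun w => Complex.exp (-(2 * Real.pi) * w)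

theorem Complex.setLIntegral_reProdIm_comp_re {s t : Set ℝ} {f : ℝ → ℝ≥0∞} (hf : Measurable f) :
    ∫⁻ w in s ×ℂ t, f w.re = volume t * ∫⁻ x in s, f x := by
  calc ∫⁻ w in s ×ℂ t, f w.re = ∫⁻ p in s ×ˢ t, f p.1 :=
        volume_preserving_equiv_real_prod.setLIntegral_comp_preimage_emb
          measurableEquivRealProd.measurableEmbedding (fun p => f p.1) (s ×ˢ t)
    _ = ∫⁻ x in s, ∫⁻ _ in t, f x := by
        rw [Measure.volume_eq_prod, ← Measure.prod_restrict]
        exact lintegral_prod _ (hf.comp measurable_fst).aemeasurable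
    _ = volume t * ∫⁻ x in s, f x := by
        simp only [setLIntegral_const, lintegral_mul_const _ hf, mul_comm]

theorem lintegral_Ici_ofReal_exp_mul {a : ℝ} (ha : a < 0) :
    ∫⁻ x in Ici 0, ENNReal.ofReal (Real.exp (a * x)) = ENNReal.ofReal (-a⁻¹) := by
  have hint : IntegrableOn (fun x => Real.exp (a * x)) (Ici 0) :=
    (integrableOn_Ici_iff_integrableOn_Ioi).mpr (integrableOn_exp_mul_Ioi ha 0)
  rw [← ofReal_integral_eq_lintegral_ofReal hint (ae_of_all _ fun x => (Real.exp_pos _).le),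
    integral_Ici_eq_integral_Ioi, integral_exp_mul_Ioi ha, mul_zero, Real.exp_zero, neg_div,
    one_div]

theorem hasDerivAt_polarCoord' (w : ℂ) :
    HasDerivAt polarCoord' (-(2 * Real.pi) * polarCoord' w) w := by
  have h := ((hasDerivAt_id w).const_mul (-(2 * Real.pi) : ℂ)).cexp
  rw [mul_one, mul_comm (cexp _)] at h
  exact h

theorem norm_polarCoord' (w : ℂ) : ‖polarCoord' w‖ = Real.exp (-(2 * Real.pi) * w.re) := by
  simp [polarCoord', Complex.norm_exp]

theorem norm_fderiv_polarCoord' (w : ℂ) :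
    ‖fderiv ℝ polarCoord' w‖ = 2 * Real.pi * Real.exp (-(2 * Real.pi) * w.re) := by
  rw [((hasDerivAt_polarCoord' w).hasFDerivAt.restrictScalars ℝ).fderiv,
    ContinuousLinearMap.norm_restrictScalars, ContinuousLinearMap.norm_toSpanSingleton,
    norm_mul, norm_polarCoord', norm_neg, norm_mul, Complex.norm_real, Complex.norm_two,
    Real.norm_of_nonneg Real.pi_pos.le]

theorem polarCoord'_mem_punctured_unitBall {w : ℂ} (hw : 0 ≤ w.re) :
    0 < ‖polarCoord' w‖ ∧ ‖polarCoord' w‖ ≤ 1 := by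
  rw [norm_polarCoord']
  exact ⟨Real.exp_pos _, Real.exp_le_one_iff.mpr (by nlinarith [Real.pi_pos])⟩

section

variable {E : Type*} [NormedAddCommGroup E] [NormedSpace ℝ E] {u : ℂ → E} {C : ℝ} {w : ℂ}

theorem norm_fderiv_comp_polarCoord'_le (hu : DifferentiableAt ℝ u (polarCoord' w))
    (hC : ‖fderiv ℝ u (polarCoord' w)‖ ≤ C) :
    ‖fderiv ℝ (u ∘ polarCoord') w‖ ≤ C * (2 * Real.pi * Real.exp (-(2 * Real.pi) * w.re)) := by
  rw [fderiv_comp w hu ((hasDerivAt_polarCoord' w).hasFDerivAt.restrictScalars ℝ).differentiableAt,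
    ← norm_fderiv_polarCoord']
  exact (ContinuousLinearMap.opNorm_comp_le _ _).trans (by gcongr)

theorem nnnorm_fderiv_comp_polarCoord'_sq_mul_exp_le (hu : DifferentiableAt ℝ u (polarCoord' w))
    (hC : ‖fderiv ℝ u (polarCoord' w)‖ ≤ C) (δ : ℝ) :
    (‖fderiv ℝ (u ∘ polarCoord') w‖₊ : ℝ≥0∞) ^ 2 * ENNReal.ofReal (Real.exp (2 * δ * w.re)) ≤
      ENNReal.ofReal (4 * Real.pi ^ 2 * C ^ 2) *
        ENNReal.ofReal (Real.exp ((2 * δ - 4 * Real.pi) * w.re)) := by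
  have hexp : Real.exp (-(2 * Real.pi) * w.re) ^ 2 * Real.exp (2 * δ * w.re) =
      Real.exp ((2 * δ - 4 * Real.pi) * w.re) := by
    rw [sq, ← Real.exp_add, ← Real.exp_add]
    ring_nf
  calc (‖fderiv ℝ (u ∘ polarCoord') w‖₊ : ℝ≥0∞) ^ 2 * ENNReal.ofReal (Real.exp (2 * δ * w.re))
      = ENNReal.ofReal (‖fderiv ℝ (u ∘ polarCoord') w‖ ^ 2 * Real.exp (2 * δ * w.re)) := by
        rw [ENNReal.ofReal_mul (by positivity), ENNReal.ofReal_pow (norm_nonneg _), ofReal_norm,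
          enorm_eq_nnnorm]
    _ ≤ ENNReal.ofReal ((C * (2 * Real.pi * Real.exp (-(2 * Real.pi) * w.re))) ^ 2 *
          Real.exp (2 * δ * w.re)) := by
        gcongr
        exact norm_fderiv_comp_polarCoord'_le hu hC
    _ = ENNReal.ofReal (4 * Real.pi ^ 2 * C ^ 2) *
          ENNReal.ofReal (Real.exp ((2 * δ - 4 * Real.pi) * w.re)) := by
        rw [← ENNReal.ofReal_mul (by positivity)]
        congr 1
        linear_combination (4 * Real.pi ^ 2 * C ^ 2) * hexp

end

theorem lintegral_fderiv_sq_strip_weighted_le_general {E : Type*} [NormedAddCommGroup E]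
    [NormedSpace ℝ E] (C : ℝ) (u : ℂ → E)
    (hdiff : ∀ z : ℂ, 0 < ‖z‖ → ‖z‖ ≤ 1 → DifferentiableAt ℝ u z)
    (hbound : ∀ z : ℂ, 0 < ‖z‖ → ‖z‖ ≤ 1 → ‖fderiv ℝ u z‖ ≤ C)
    (δ : ℝ) (hδ : δ < 2 * Real.pi) :
    (∫⁻ w in {w : ℂ | 0 ≤ w.re ∧ w.im ∈ Set.Ico (0 : ℝ) 1},
        (‖fderiv ℝ (u ∘ polarCoord') w‖₊ : ℝ≥0∞) ^ 2 *
          ENNReal.ofReal (Real.exp (2 * δ * w.re))) ≤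
      ENNReal.ofReal (4 * Real.pi ^ 2 * C ^ 2 / (4 * Real.pi - 2 * δ)) := by
  have hpoint : ∀ w ∈ Ici 0 ×ℂ Ico 0 1,
      (‖fderiv ℝ (u ∘ polarCoord') w‖₊ : ℝ≥0∞) ^ 2 * ENNReal.ofReal (Real.exp (2 * δ * w.re)) ≤
        ENNReal.ofReal (4 * Real.pi ^ 2 * C ^ 2) *
          ENNReal.ofReal (Real.exp ((2 * δ - 4 * Real.pi) * w.re)) := fun w hw => by
    obtain ⟨hz0, hz1⟩ := polarCoord'_mem_punctured_unitBall hw.1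
    exact nnnorm_fderiv_comp_polarCoord'_sq_mul_exp_le (hdiff _ hz0 hz1) (hbound _ hz0 hz1) δ
  have hdecay : 2 * δ - 4 * Real.pi < 0 := by linarith
  have hexp_meas :
      Measurable fun x : ℝ => ENNReal.ofReal (Real.exp ((2 * δ - 4 * Real.pi) * x)) := by
    fun_prop
  have hstrip_meas : MeasurableSet (Ici (0 : ℝ) ×ℂ Ico 0 1) :=
    (measurable_re measurableSet_Ici).inter (measurable_im measurableSet_Ico)
  calc _ ≤ ∫⁻ w in Ici 0 ×ℂ Ico 0 1, ENNReal.ofReal (4 * Real.pi ^ 2 * C ^ 2) *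
          ENNReal.ofReal (Real.exp ((2 * δ - 4 * Real.pi) * w.re)) :=
        setLIntegral_mono' hstrip_meas hpoint
    _ = ENNReal.ofReal (4 * Real.pi ^ 2 * C ^ 2) *
          ∫⁻ x in Ici 0, ENNReal.ofReal (Real.exp ((2 * δ - 4 * Real.pi) * x)) := by
        rw [lintegral_const_mul' _ _ ENNReal.ofReal_ne_top,
          Complex.setLIntegral_reProdIm_comp_re hexp_meas, Real.volume_Ico, sub_zero,
          ENNReal.ofReal_one, one_mul]
    _ = _ := by
        rw [lintegral_Ici_ofReal_exp_mul hdecay, ← ENNReal.ofReal_mul (by positivity),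
          ← inv_neg, neg_sub, div_eq_mul_inv]

/-- First-derivative weighted estimate in holomorphic polar coordinates: if
`‖Du‖ ≤ C` on the punctured unit disk, then for `0 < δ < 2π`,
`∫_{strip} ‖D(u∘Ψ)(w)‖² e^{2δ Re w} dA(w) ≤ 4π²C²/(4π - 2δ)`. -/
theorem lintegral_fderiv_sq_strip_weighted_le {E : Type*} [NormedAddCommGroup E]
    [NormedSpace ℝ E] [MeasurableSpace (ℂ →L[ℝ] E)] [BorelSpace (ℂ →L[ℝ] E)]
    (C : ℝ) (hC : 0 ≤ C) (u : ℂ → E)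
    (hdiff : ∀ z : ℂ, 0 < ‖z‖ → ‖z‖ ≤ 1 → DifferentiableAt ℝ u z)
    (hmeas : Measurable (({z : ℂ | 0 < ‖z‖ ∧ ‖z‖ ≤ 1}).restrict fun z => fderiv ℝ u z))
    (hbound : ∀ z : ℂ, 0 < ‖z‖ → ‖z‖ ≤ 1 → ‖fderiv ℝ u z‖ ≤ C)
    (δ : ℝ) (hδ0 : 0 < δ) (hδ : δ < 2 * Real.pi) :
    (∫⁻ w in {w : ℂ | 0 ≤ w.re ∧ w.im ∈ Set.Ico (0 : ℝ) 1},
        (‖fderiv ℝ (u ∘ polarCoord') w‖₊ : ℝ≥0∞) ^ 2 *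
          ENNReal.ofReal (Real.exp (2 * δ * w.re))) ≤
      ENNReal.ofReal (4 * Real.pi ^ 2 * C ^ 2 / (4 * Real.pi - 2 * δ)) :=
  lintegral_fderiv_sq_strip_weighted_le_general C u hdiff hbound δ hδ
end

section
/- Let k be a commutative ring and let V and W be k-modules. Let J, J' : V →ₗ[k] V be linear endomorphisms with J ∘ J = -id and J' ∘ J' = -id, suppose J + J' is invertible (a unit of the endomorphism ring of V), and set S = (J+J')⁻¹ ∘ (J' - J). Let j : W →ₗ[k] W and A : W →ₗ[k] V be linear maps satisfying J ∘ A = - (A ∘ j). Then J' ∘ ((id - S) ∘ A) = - (((id - S) ∘ A) ∘ j). -/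
/-!
Since `J (J + J') = -1 + J J' = (J + J') J'`, the inverse `T` of `J + J'` satisfies
`J' T = T J`. With `T (J + J') = 1` one gets `1 - S = T ((J + J') - (J' - J)) = 2 T J`, so
`1 - S` is complex linear from `(V, J)` to `(V, J')`, and a complex linear map composed with a
`(J, j)`-antilinear one is `(J', j)`-antilinear.
-/

section Ring

variable {R : Type*} [Ring R] {J J' T : R}

theorem semiconjBy_add_of_mul_self_eq_neg_one (hJ : J * J = -1) (hJ' : J' * J' = -1) :
    SemiconjBy (J + J') J' J := by
  simp only [SemiconjBy, add_mul, mul_add, hJ, hJ']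
  abel

theorem semiconjBy_one_sub_mul_sub (hJ : J * J = -1) (hJ' : J' * J' = -1)
    (hT1 : T * (J + J') = 1) (hT2 : (J + J') * T = 1) :
    SemiconjBy (1 - T * (J' - J)) J J' := by
  have hTJ : SemiconjBy T J J' :=
    (semiconjBy_add_of_mul_self_eq_neg_one hJ hJ').units_inv_symm_left
      (a := ⟨J + J', T, hT2, hT1⟩)
  have hS : 1 - T * (J' - J) = 2 * (T * J) := by
    rw [← hT1]
    noncomm_ring
  rw [hS]
  exact .mul_left (Commute.ofNat_left 2 J') (hTJ.mul_left (Commute.refl J))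

end Ring

namespace LinearMap

variable {k V V' W : Type*} [Semiring k] [AddCommGroup V] [Module k V] [AddCommGroup V']
  [Module k V'] [AddCommGroup W] [Module k W]

theorem comp_anticommute_of_intertwines {J : V →ₗ[k] V} {J' : V' →ₗ[k] V'} {P : V →ₗ[k] V'}
    {j : W →ₗ[k] W} {A : W →ₗ[k] V} (hP : J' ∘ₗ P = P ∘ₗ J) (hA : J ∘ₗ A = -(A ∘ₗ j)) :
    J' ∘ₗ (P ∘ₗ A) = -((P ∘ₗ A) ∘ₗ j) := by
  rw [← comp_assoc, hP, comp_assoc, hA, comp_neg, comp_assoc]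

end LinearMap

/-- Transport of `(J, j)`-complex antilinear maps: if `J² = J'² = -id`,
`J + J'` is invertible with inverse `T`, `S = T ∘ (J' - J)`, and
`J ∘ A = -(A ∘ j)`, then `J' ∘ ((id - S) ∘ A) = -(((id - S) ∘ A) ∘ j)`. -/
theorem transport_antilinear {k : Type*} [CommRing k] {V W : Type*}
    [AddCommGroup V] [Module k V] [AddCommGroup W] [Module k W]
    (J J' T : V →ₗ[k] V)
    (hJ : J ∘ₗ J = -LinearMap.id) (hJ' : J' ∘ₗ J' = -LinearMap.id)
    (hT1 : T ∘ₗ (J + J') = LinearMap.id) (hT2 : (J + J') ∘ₗ T = LinearMap.id)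
    (j : W →ₗ[k] W) (A : W →ₗ[k] V)
    (hA : J ∘ₗ A = -(A ∘ₗ j)) :
    J' ∘ₗ ((LinearMap.id - T ∘ₗ (J' - J)) ∘ₗ A) =
      -(((LinearMap.id - T ∘ₗ (J' - J)) ∘ₗ A) ∘ₗ j) :=
  LinearMap.comp_anticommute_of_intertwines
    (semiconjBy_one_sub_mul_sub (R := Module.End k V) hJ hJ' hT1 hT2).eq.symm hA
end

section
/- Let k be a commutative ring and let V and W be k-modules. Let J, J' : V →ₗ[k] V be linear endomorphisms with J ∘ J = -id and J' ∘ J' = -id, suppose J + J' is invertible (a unit of the endomorphism ring of V), and set S = (J+J')⁻¹ ∘ (J' - J). Let j : W →ₗ[k] W and A : W →ₗ[k] V be linear maps satisfying J ∘ A = A ∘ j. Then J' ∘ ((id - S) ∘ A) = ((id - S) ∘ A) ∘ j. -/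
/-! Since `J² = J'²`, the map `J + J'` intertwines `J'` with `J`, so its inverse `T` satisfies
`J' T = T J`. As `id - S = T (J + J)`, it carries `J` to `J'`, and composing with `A` carries
`j` to `J'`. -/

theorem semiconjBy_add_of_mul_self_eq {R : Type*} [NonUnitalNonAssocSemiring R] {a b : R}
    (h : a * a = b * b) : SemiconjBy (a + b) b a := by
  rw [SemiconjBy, add_mul, mul_add, h, add_comm (a * b)]

theorem one_sub_mul_sub_eq_mul_add_self {R : Type*} [Ring R] {t a b : R}
    (h : t * (a + b) = 1) : 1 - t * (b - a) = t * (a + a) := by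
  rw [← h, ← mul_sub]
  congr 1
  abel

/-- Transport of `(J, j)`-complex linear maps: if `J² = J'² = -id`,
`J + J'` is invertible with inverse `T`, `S = T ∘ (J' - J)`, and
`J ∘ A = A ∘ j`, then `J' ∘ ((id - S) ∘ A) = ((id - S) ∘ A) ∘ j`. -/
theorem transport_linear {k : Type*} [CommRing k] {V W : Type*}
    [AddCommGroup V] [Module k V] [AddCommGroup W] [Module k W]
    (J J' T : V →ₗ[k] V)
    (hJ : J ∘ₗ J = -LinearMap.id) (hJ' : J' ∘ₗ J' = -LinearMap.id)
    (hT1 : T ∘ₗ (J + J') = LinearMap.id) (hT2 : (J + J') ∘ₗ T = LinearMap.id)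
    (j : W →ₗ[k] W) (A : W →ₗ[k] V)
    (hA : J ∘ₗ A = A ∘ₗ j) :
    J' ∘ₗ ((LinearMap.id - T ∘ₗ (J' - J)) ∘ₗ A) =
      ((LinearMap.id - T ∘ₗ (J' - J)) ∘ₗ A) ∘ₗ j := by
  let u : (Module.End k V)ˣ := ⟨J + J', T, hT2, hT1⟩
  have hTJ : SemiconjBy T J J' :=
    (semiconjBy_add_of_mul_self_eq (hJ.trans hJ'.symm)).units_inv_symm_left (a := u)
  have hX : SemiconjBy (T * (J + J)) J J' :=
    hTJ.mul_left ((Commute.refl J).add_left (Commute.refl J))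
  have hS : LinearMap.id - T ∘ₗ (J' - J) = T * (J + J) := one_sub_mul_sub_eq_mul_add_self hT1
  rw [hS, ← LinearMap.comp_assoc, ← Module.End.mul_eq_comp, ← hX.eq, Module.End.mul_eq_comp,
    LinearMap.comp_assoc, hA, LinearMap.comp_assoc]
end
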